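/- Let k ≥ 2 and F(n₁,…,n_k) = f(gcd(n₁,…,n_k)) for an arithmetic function f. Then the convolute F̃(n) = ∑_{n₁⋯n_k = n} F(n₁,…,n_k) satisfies F̃(n) = ∑_{dδ = n} g(d) τ_k(δ), where g(d) = (μ*f)(m) if d = m^k is a perfect k-th power and g(d) = 0 otherwise. -/

import Mathlib

open Finset Filter

noncomputable section

/-- The set of ordered `k`-tuples of positive integers with product `n`. -/
def tuplesProd (k n : ℕ) : Finset (Fin k → ℕ) :=
  (Fintype.piFinset fun _ => n.divisors).filter fun v => ∏ i, v i = n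

/-- The Piltz divisor function `τ_k`. -/
def piltz (k n : ℕ) : ℕ := (tuplesProd k n).card

/-- Dirichlet convolution of the Möbius function with `f`. -/
def muConv (f : ℕ → ℂ) (d : ℕ) : ℂ :=
  ∑ p ∈ d.divisorsAntidiagonal, ((ArithmeticFunction.moebius p.1 : ℤ) : ℂ) * f p.2

/-! Möbius inversion writes `f (gcd v)` as `∑_{m ∣ gcd v} (μ * f) m`. Swapping the sums, `(μ * f) m`
is weighted by the number of `k`-tuples with product `n` all of whose entries are divisible by `m`;
dividing them by `m` shows that this number is `τ_k (n / m ^ k)` when `m ^ k ∣ n` and `0` otherwise.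
Since `g` is supported on `k`-th powers with `g (m ^ k) = (μ * f) m`, this is the right-hand side. -/

lemma mem_tuplesProd {k n : ℕ} {v : Fin k → ℕ} :
    v ∈ tuplesProd k n ↔ ∏ i, v i = n ∧ n ≠ 0 := by
  simp only [tuplesProd, mem_filter, Fintype.mem_piFinset, Nat.mem_divisors]
  constructor
  · rintro ⟨hdiv, rfl⟩
    exact ⟨rfl, prod_ne_zero_iff.mpr fun i _ => ne_zero_of_dvd_ne_zero (hdiv i).2 (hdiv i).1⟩
  · rintro ⟨rfl, hn⟩
    exact ⟨fun i => ⟨Finset.dvd_prod_of_mem v (mem_univ i), hn⟩, rfl⟩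

lemma sum_divisors_muConv (f : ℕ → ℂ) {d : ℕ} (hd : d ≠ 0) :
    ∑ m ∈ d.divisors, muConv f m = f d := by
  refine ArithmeticFunction.sum_eq_iff_sum_smul_moebius_eq.mpr (fun m _ => ?_) d
    (Nat.pos_of_ne_zero hd)
  simp only [muConv, zsmul_eq_mul]

lemma pow_dvd_prod_of_forall_dvd {M : Type*} [CommMonoid M] {k : ℕ} {m : M} {v : Fin k → M} (h : ∀ i, m ∣ v i) :
    m ^ k ∣ ∏ i, v i := by
  simpa using Finset.prod_dvd_prod_of_dvd (s := univ) (fun _ => m) v fun i _ => h i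

lemma card_filter_dvd_tuplesProd {k m : ℕ} (n : ℕ) (hm : m ≠ 0) :
    #{v ∈ tuplesProd k n | ∀ i, m ∣ v i} = if m ^ k ∣ n then piltz k (n / m ^ k) else 0 := by
  split_ifs with h
  · obtain ⟨q, rfl⟩ := h
    have hmk : m ^ k ≠ 0 := pow_ne_zero k hm
    have hmap : {v ∈ tuplesProd k (m ^ k * q) | ∀ i, m ∣ v i} =
        (tuplesProd k q).map ⟨(m • ·), smul_right_injective _ hm⟩ := by
      ext v
      simp only [mem_filter, Finset.mem_map, mem_tuplesProd, Function.Embedding.coeFn_mk]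
      constructor
      · rintro ⟨⟨hprod, hn⟩, hdvd⟩
        choose w hw using hdvd
        have hv : v = m • w := funext hw
        refine ⟨w, ⟨?_, right_ne_zero_of_mul hn⟩, hv.symm⟩
        rw [hv] at hprod
        simpa [Finset.prod_mul_distrib, hm] using hprod
      · rintro ⟨w, ⟨rfl, hq⟩, rfl⟩
        exact ⟨⟨by simp [Finset.prod_mul_distrib], mul_ne_zero hmk hq⟩,
          fun i => dvd_mul_right m (w i)⟩
    rw [hmap, card_map, Nat.mul_div_cancel_left q (Nat.pos_of_ne_zero hmk), piltz]
  · refine card_eq_zero.mpr (filter_eq_empty_iff.mpr fun v hv hdvd => h ?_)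
    exact (mem_tuplesProd.mp hv).1 ▸ pow_dvd_prod_of_forall_dvd hdvd

lemma sum_tuplesProd_comp_gcd {k : ℕ} (hk : k ≠ 0) (f : ℕ → ℂ) (n : ℕ) :
    ∑ v ∈ tuplesProd k n, f (univ.gcd v) =
      ∑ m ∈ n.divisors, #{v ∈ tuplesProd k n | ∀ i, m ∣ v i} • muConv f m := by
  have hgcd_dvd : ∀ v ∈ tuplesProd k n, univ.gcd v ∣ n := fun v hv =>
    (mem_tuplesProd.mp hv).1 ▸ (gcd_dvd (mem_univ ⟨0, Nat.pos_of_ne_zero hk⟩)).trans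
      (dvd_prod_of_mem v (mem_univ _))
  have hgcd_ne : ∀ v ∈ tuplesProd k n, univ.gcd v ≠ 0 := fun v hv =>
    ne_zero_of_dvd_ne_zero (mem_tuplesProd.mp hv).2 (hgcd_dvd v hv)
  calc ∑ v ∈ tuplesProd k n, f (univ.gcd v)
      = ∑ v ∈ tuplesProd k n, ∑ m ∈ (univ.gcd v).divisors, muConv f m :=
        sum_congr rfl fun v hv => (sum_divisors_muConv f (hgcd_ne v hv)).symm
    _ = ∑ m ∈ n.divisors, ∑ v ∈ tuplesProd k n with ∀ i, m ∣ v i, muConv f m := by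
        refine sum_comm' fun v m => ?_
        simp only [mem_filter, Nat.mem_divisors, Finset.dvd_gcd_iff, mem_univ, true_implies]
        constructor
        · rintro ⟨hv, hdvd, -⟩
          exact ⟨⟨hv, hdvd⟩, (Finset.dvd_gcd fun i _ => hdvd i).trans (hgcd_dvd v hv),
            (mem_tuplesProd.mp hv).2⟩
        · rintro ⟨⟨hv, hdvd⟩, -, -⟩
          exact ⟨hv, hdvd, hgcd_ne v hv⟩
    _ = _ := by simp only [sum_const]

lemma sum_divisors_eq_sum_pow_dvd {M : Type*} [AddCommMonoid M] {k : ℕ} (hk : k ≠ 0) (n : ℕ)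
    {G : ℕ → M} (hG : ∀ d, (¬ ∃ m, m ^ k = d) → G d = 0) :
    ∑ d ∈ n.divisors, G d = ∑ m ∈ n.divisors with m ^ k ∣ n, G (m ^ k) := by
  rw [← sum_image fun x _ y _ h => Nat.pow_left_injective hk h]
  refine (sum_subset (fun d hd => ?_) fun d hd hd' => hG d ?_).symm
  · obtain ⟨m, hm, rfl⟩ := mem_image.mp hd
    simp only [mem_filter, Nat.mem_divisors] at hm ⊢
    exact ⟨hm.2, hm.1.2⟩
  · rintro ⟨m, rfl⟩
    obtain ⟨hdvd, hn⟩ := Nat.mem_divisors.mp hd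
    exact hd' (mem_image_of_mem _ (mem_filter.mpr
      ⟨Nat.mem_divisors.mpr ⟨(dvd_pow_self m hk).trans hdvd, hn⟩, hdvd⟩))

theorem gcd_convolute_as_g_conv_piltz_general (k : ℕ) (hk : 2 ≤ k) (f g : ℕ → ℂ)
    (hg1 : ∀ m : ℕ, g (m ^ k) = muConv f m)
    (hg2 : ∀ d : ℕ, (¬ ∃ m : ℕ, m ^ k = d) → g d = 0)
    (n : ℕ) :
    ∑ v ∈ tuplesProd k n, f (Finset.univ.gcd v) =
      ∑ p ∈ n.divisorsAntidiagonal, g p.1 * (piltz k p.2 : ℂ) := by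
  have hk0 : k ≠ 0 := by omega
  calc ∑ v ∈ tuplesProd k n, f (univ.gcd v)
      = ∑ m ∈ n.divisors, #{v ∈ tuplesProd k n | ∀ i, m ∣ v i} • muConv f m :=
        sum_tuplesProd_comp_gcd hk0 f n
    _ = ∑ m ∈ n.divisors with m ^ k ∣ n, piltz k (n / m ^ k) • muConv f m := by
        rw [sum_filter]
        refine sum_congr rfl fun m hm => ?_
        rw [card_filter_dvd_tuplesProd n (Nat.pos_of_mem_divisors hm).ne', ite_smul, zero_smul]
    _ = ∑ m ∈ n.divisors with m ^ k ∣ n, g (m ^ k) * (piltz k (n / m ^ k) : ℂ) :=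
        sum_congr rfl fun m _ => by rw [hg1, nsmul_eq_mul, mul_comm]
    _ = ∑ p ∈ n.divisorsAntidiagonal, g p.1 * (piltz k p.2 : ℂ) := by
        rw [Nat.sum_divisorsAntidiagonal fun d e => g d * (piltz k e : ℂ),
          sum_divisors_eq_sum_pow_dvd hk0 n fun d hd => by rw [hg2 d hd, zero_mul]]

theorem gcd_convolute_as_g_conv_piltz (k : ℕ) (hk : 2 ≤ k) (f g : ℕ → ℂ)
    (hg1 : ∀ m : ℕ, g (m ^ k) = muConv f m)
    (hg2 : ∀ d : ℕ, (¬ ∃ m : ℕ, m ^ k = d) → g d = 0)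
    (n : ℕ) (hn : 0 < n) :
    ∑ v ∈ tuplesProd k n, f (Finset.univ.gcd v) =
      ∑ p ∈ n.divisorsAntidiagonal, g p.1 * (piltz k p.2 : ℂ) :=
  gcd_convolute_as_g_conv_piltz_general k hk f g hg1 hg2 n
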